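/- arXiv:1310.6013 — 3 statements merged into one kernel-verified Lean document; each statement's English description precedes it below -/
import Mathlib

section
/- Let r ≥ 3 and x = (2,1,1,…,1) with r−2 entries equal to 1 (so the entries of x sum to r), and let n ≥ r. Then m(x,n) ≤ ⌈(n−1)/(r−1)⌉. Concretely, if P is a family of ⌈(n−1)/(r−1)⌉ many (r−1)-element subsets of {2,…,n} whose union is {2,…,n}, then the family F = {{1} ∪ X : X ∈ P} admits no x-acceptable Hamilton cycle in K_n. -/
/-- A Hamilton cycle in the complete graph `K_n` is modelled as a cyclic ordering of the
vertex set, i.e. a bijection `c : ZMod n ≃ Fin n`; the vertices of the cycle in cyclic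
order are `c 0, c 1, …, c (n-1)`.  `cycInterval c t x` is the interval
`{c (t+1), c (t+2), …, c (t+x)}` of `x` consecutive vertices of the cycle. -/
def cycInterval {n : ℕ} (c : ZMod n ≃ Fin n) (t : ZMod n) (x : ℕ) : Finset (Fin n) :=
  (Finset.range x).image fun i : ℕ => c (t + (i : ZMod n) + 1)

/-- Given a vector `x = (x₁, …, x_k)` of positive integers and a family `F` of subsets
of the vertex set, a Hamilton cycle `c` of `K_n` is `x`-*acceptable* for `F` if there
do not exist `t₁, …, t_k` such that the union
`⋃ i, {c (tᵢ+1), …, c (tᵢ+xᵢ)}` is an element of `F`. -/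
def IsXAcceptable {n k : ℕ} (x : Fin k → ℕ) (F : Set (Finset (Fin n)))
    (c : ZMod n ≃ Fin n) : Prop :=
  ¬ ∃ t : Fin k → ZMod n,
      (Finset.univ.biUnion fun i : Fin k => cycInterval c (t i) (x i)) ∈ F

/-- `mxn x n` is the size of the smallest family `F` of `r`-element subsets of `[n]`
(where `r = x₁ + ⋯ + x_k`) such that `K_n` has no `x`-acceptable Hamilton cycle with
respect to `F`. -/
noncomputable def mxn {k : ℕ} (x : Fin k → ℕ) (n : ℕ) : ℕ :=
  sInf {m : ℕ | ∃ F : Set (Finset (Fin n)),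
    (∀ A ∈ F, A.card = ∑ i : Fin k, x i) ∧ F.ncard = m ∧
    ∀ c : ZMod n ≃ Fin n, ¬ IsXAcceptable x F c}

lemma cycInterval_one {n : ℕ} (c : ZMod n ≃ Fin n) (t : ZMod n) :
    cycInterval c t 1 = {c (t + 1)} := by
  simp [cycInterval]

lemma cycInterval_two {n : ℕ} (c : ZMod n ≃ Fin n) (t : ZMod n) :
    cycInterval c t 2 = {c (t + 1), c (t + 2)} := by
  simp [cycInterval, Finset.range_add_one]
  rw [Finset.pair_comm]
  ring_nf

lemma key {r n : ℕ} (hr : 3 ≤ r) (hn : r ≤ n) (c : ZMod n ≃ Fin n)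
    (X : Finset (Fin n)) (hcard : X.card = r - 1)
    (hw : c (c.symm (⟨0, by omega⟩ : Fin n) + 1) ∈ X) :
    ∃ t : Fin (r - 1) → ZMod n,
      (Finset.univ.biUnion fun i : Fin (r - 1) =>
          cycInterval c (t i) (if (i : ℕ) = 0 then 2 else 1))
        = insert (⟨0, by omega⟩ : Fin n) X := by
  set z : Fin n := ⟨0, by omega⟩ with hz
  set s : ZMod n := c.symm z with hs
  set w : Fin n := c (s + 1) with hwdef
  have hYcard : (X.erase w).card = r - 2 := by
    rw [Finset.card_erase_of_mem hw, hcard]; omega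
  set f : Fin (r - 2) → Fin n := fun j => ((X.erase w).orderIsoOfFin hYcard j : Fin n)
    with hf
  refine ⟨fun i => if (i : ℕ) = 0 then s - 1
      else c.symm (f ⟨(i : ℕ) - 1, by omega⟩) - 1, ?_⟩
  ext a
  simp only [Finset.mem_biUnion, Finset.mem_univ, true_and, Finset.mem_insert]
  constructor
  · rintro ⟨i, hi⟩
    by_cases h0 : (i : ℕ) = 0
    · rw [if_pos h0, if_pos h0, cycInterval_two] at hi
      simp only [Finset.mem_insert, Finset.mem_singleton] at hi
      rcases hi with h | h
      · left; rw [h, sub_add_cancel, hs, c.apply_symm_apply]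
      · right
        have : s - 1 + 2 = s + 1 := by ring
        rw [h, this]; exact hw
    · rw [if_neg h0, if_neg h0, cycInterval_one] at hi
      simp only [Finset.mem_singleton] at hi
      right
      rw [hi, sub_add_cancel, c.apply_symm_apply]
      exact Finset.mem_of_mem_erase ((X.erase w).orderIsoOfFin hYcard _).2
  · rintro (h | h)
    · refine ⟨⟨0, by omega⟩, ?_⟩
      show a ∈ cycInterval c (s - 1) 2
      rw [cycInterval_two]
      simp only [Finset.mem_insert, Finset.mem_singleton]
      left; rw [h, sub_add_cancel, hs, c.apply_symm_apply]
    · by_cases haw : a = w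
      · refine ⟨⟨0, by omega⟩, ?_⟩
        show a ∈ cycInterval c (s - 1) 2
        rw [cycInterval_two]
        simp only [Finset.mem_insert, Finset.mem_singleton]
        right
        have h2 : s - 1 + 2 = s + 1 := by ring
        rw [h2, haw]
      · have ha : a ∈ X.erase w := Finset.mem_erase.2 ⟨haw, h⟩
        obtain ⟨j, hj⟩ := (((X.erase w).orderIsoOfFin hYcard).surjective ⟨a, ha⟩)
        refine ⟨⟨(j : ℕ) + 1, by omega⟩, ?_⟩
        show a ∈ cycInterval c (c.symm (f ⟨(j : ℕ) + 1 - 1, by omega⟩) - 1) 1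
        rw [cycInterval_one, Finset.mem_singleton, sub_add_cancel, c.apply_symm_apply]
        have hjj : (⟨(j : ℕ) + 1 - 1, by omega⟩ : Fin (r - 2)) = j := by ext; simp
        rw [hjj]
        show a = (((X.erase w).orderIsoOfFin hYcard) j : Fin n)
        rw [hj]

/-- **Theorem (upper bound for `x = (2,1,…,1)`).**  Let `r ≥ 3`, let
`x = (2,1,…,1)` have `r − 2` entries equal to `1` (so `k = r − 1` and the entries sum to
`r`), and let `n ≥ r`.  If `P` is a family of `⌈(n−1)/(r−1)⌉` many `(r−1)`-element
subsets of `{2, …, n}` whose union is `{2, …, n}`, then the family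
`F = {{1} ∪ X : X ∈ P}` admits no `x`-acceptable Hamilton cycle in `K_n`; consequently
`m(x,n) ≤ ⌈(n−1)/(r−1)⌉`.  (Here `[n]` is modelled as `Fin n` with `i ∈ [n]`
corresponding to the element of value `i − 1`; in particular `1 ∈ [n]` corresponds to
the value `0` and `{2, …, n}` to the elements of value `≥ 1`.) -/
theorem upper_bound_two_one_one (r n : ℕ) (hr : 3 ≤ r) (hn : r ≤ n)
    (P : Set (Finset (Fin n)))
    (hPcard : ∀ X ∈ P, X.card = r - 1)
    (hPsub : ∀ X ∈ P, ∀ v ∈ X, 1 ≤ (v : ℕ))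
    (hPsize : P.ncard = (n - 1 + (r - 2)) / (r - 1))
    (hPcover : ∀ v : Fin n, 1 ≤ (v : ℕ) → ∃ X ∈ P, v ∈ X) :
    (∀ c : ZMod n ≃ Fin n,
      ¬ IsXAcceptable (fun i : Fin (r - 1) => if (i : ℕ) = 0 then 2 else 1)
        {Y : Finset (Fin n) | ∃ X ∈ P, Y = insert (⟨0, by omega⟩ : Fin n) X} c) ∧
    mxn (fun i : Fin (r - 1) => if (i : ℕ) = 0 then 2 else 1) n
      ≤ (n - 1 + (r - 2)) / (r - 1) := by
  haveI : Fact (1 < n) := ⟨by omega⟩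
  set z : Fin n := ⟨0, by omega⟩ with hz
  set F : Set (Finset (Fin n)) := {Y | ∃ X ∈ P, Y = insert z X} with hF
  have hzX : ∀ X ∈ P, z ∉ X := by
    intro X hX hmem
    have := hPsub X hX z hmem
    simp [hz] at this
  have hacc : ∀ c : ZMod n ≃ Fin n,
      ¬ IsXAcceptable (fun i : Fin (r - 1) => if (i : ℕ) = 0 then 2 else 1) F c := by
    intro c hc
    apply hc
    set s : ZMod n := c.symm z with hs
    have hne : c (s + 1) ≠ z := by
      intro hcontra
      have : s + 1 = s := by
        have := c.injective (hcontra.trans (c.apply_symm_apply z).symm)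
        exact this
      exact one_ne_zero (add_eq_left.mp this)
    have hge : 1 ≤ ((c (s + 1) : Fin n) : ℕ) := by
      rcases Nat.eq_zero_or_pos ((c (s + 1) : Fin n) : ℕ) with h0 | h1
      · exact absurd (Fin.ext h0) hne
      · exact h1
    obtain ⟨X, hXP, hwX⟩ := hPcover _ hge
    obtain ⟨t, ht⟩ := key hr hn c X (hPcard X hXP) hwX
    exact ⟨t, by rw [ht]; exact ⟨X, hXP, rfl⟩⟩
  refine ⟨hacc, ?_⟩
  have hsum : ∑ i : Fin (r - 1), (if (i : ℕ) = 0 then 2 else 1) = r := by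
    have h1 : ∀ i : Fin (r - 1),
        (if (i : ℕ) = 0 then 2 else 1) = ((if (i : ℕ) = 0 then 1 else 0) + 1) := by
      intro i; split <;> rfl
    rw [Finset.sum_congr rfl fun i _ => h1 i, Finset.sum_add_distrib,
      Finset.sum_boole, Finset.sum_const]
    have hfilt : (Finset.univ.filter fun i : Fin (r - 1) => (i : ℕ) = 0)
        = {⟨0, by omega⟩} := by
      ext i
      simp [Fin.ext_iff]
    rw [hfilt]
    simp
    omega
  have hcards : ∀ A ∈ F, A.card = ∑ i : Fin (r - 1), (if (i : ℕ) = 0 then 2 else 1) := by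
    rintro A ⟨X, hXP, rfl⟩
    rw [hsum, Finset.card_insert_of_notMem (hzX X hXP), hPcard X hXP]
    omega
  have hFimg : F = (fun X => insert z X) '' P := by
    ext Y
    simp only [hF, Set.mem_setOf_eq, Set.mem_image]
    constructor
    · rintro ⟨X, hX, rfl⟩; exact ⟨X, hX, rfl⟩
    · rintro ⟨X, hX, rfl⟩; exact ⟨X, hX, rfl⟩
  have hFn : F.ncard = (n - 1 + (r - 2)) / (r - 1) := by
    rw [hFimg, Set.ncard_image_of_injOn, hPsize]
    intro X hX X' hX' hXX'
    have hXX2 : insert z X = insert z X' := hXX'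
    have : (insert z X).erase z = (insert z X').erase z := by rw [hXX2]
    rwa [Finset.erase_insert (hzX X hX), Finset.erase_insert (hzX X' hX')] at this
  exact Nat.sInf_le ⟨F, hcards, hFn, hacc⟩
end

section
/- Let r ≥ 3 and n ≥ r. If t copies of the complete graph K_r can be deleted from K_n (i.e., all edges lying inside each of t chosen r-element vertex subsets are removed) so that the resulting graph on n vertices is not Hamiltonian, then t ≥ n(n−1)/((n+2r)(r−1)). Equivalently, for x = (2,1,…,1) with r−2 ones, m(x,n) ≥ n(n−1)/((n+2r)(r−1)). -/
open SimpleGraph Finset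

namespace ZMod
variable {m : ℕ}

theorem eq_neg_one_iff_val_eq {z : ZMod (m + 1)} : z = -1 ↔ z.val = m :=
  ⟨fun h => h ▸ val_neg_one m, fun h => val_injective _ (h.trans (val_neg_one m).symm)⟩

theorem val_add_one_of_ne_neg_one {z : ZMod (m + 1)} (hz : z ≠ -1) :
    (z + 1).val = z.val + 1 := by
  have : z.val < m := lt_of_le_of_ne (Nat.lt_succ_iff.1 z.val_lt) (mt eq_neg_one_iff_val_eq.2 hz)
  rw [val_add, val_one_eq_one_mod, Nat.add_mod_mod, Nat.mod_eq_of_lt (by omega)]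

theorem val_sub_of_val_lt {k z : ZMod (m + 1)} (h : k.val < z.val) :
    (k - z).val = m + 1 + k.val - z.val := by
  have hz := z.val_lt
  rw [← neg_sub, neg_val, if_neg, val_sub h.le]
  · omega
  · intro h0
    rw [sub_eq_zero] at h0
    exact h.ne' (congrArg val h0)

end ZMod

namespace SimpleGraph
variable {V : Type*} {G : SimpleGraph V} {n : ℕ}

def IsHamiltonianOrdering (G : SimpleGraph V) (σ : ZMod n ≃ V) : Prop :=
  ∀ j, G.Adj (σ j) (σ (j + 1))

theorem IsHamiltonianOrdering.exists_isHamiltonianCycle [DecidableEq V] (hn : 3 ≤ n)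
    {σ : ZMod n ≃ V} (hσ : G.IsHamiltonianOrdering σ) :
    ∃ (v : V) (p : G.Walk v v), p.IsHamiltonianCycle := by
  obtain ⟨m, rfl⟩ : ∃ m, n = m + 3 := ⟨n - 3, by omega⟩
  let φ : cycleGraph (m + 3) →g G :=
    ⟨σ, fun {i j} h => by
      rcases cycleGraph_adj.1 h with h | h
      · obtain rfl : i = j + 1 := by rw [← h, add_sub_cancel]
        exact (hσ j).symm
      · obtain rfl : j = i + 1 := by rw [← h, add_sub_cancel]
        exact hσ i⟩
  have hcycle : (cycleGraph.cycle m).IsHamiltonianCycle :=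
    Walk.isHamiltonianCycle_iff_isCycle_and_length_eq.2 ⟨cycleGraph.isCycle_cycle, by simp⟩
  exact ⟨_, _, hcycle.map (f := φ) σ.bijective⟩

theorem isHamiltonianOrdering_top (hn : 2 ≤ n) (σ : ZMod n ≃ V) :
    (⊤ : SimpleGraph V).IsHamiltonianOrdering σ := by
  have := ZMod.nontrivial_iff.2 (by omega : n ≠ 1)
  exact fun j => σ.injective.ne (by simp)

/-- Fixes `0, …, k` and reverses the cyclic segment `k + 1, …, -1` of `ZMod n`. -/
def reverseAfter (k z : ZMod n) : ZMod n := if z.val ≤ k.val then z else k - z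

theorem reverseAfter_involutive {m : ℕ} (k : ZMod (m + 1)) :
    Function.Involutive (reverseAfter k) := by
  intro z
  unfold reverseAfter
  split_ifs with hz hz' <;> try rfl
  · rw [ZMod.val_sub_of_val_lt (not_le.1 hz)] at hz'
    have := z.val_lt
    omega
  · exact sub_sub_cancel k z

section Rotation
variable [Fintype V] [DecidableRel G.Adj]

theorem exists_adj_adj_of_le_degree_add_degree [NeZero n] (σ : ZMod n ≃ V)
    (hdeg : n ≤ G.degree (σ 0) + G.degree (σ (-1))) :
    ∃ k, k ≠ -1 ∧ G.Adj (σ 0) (σ (k + 1)) ∧ G.Adj (σ (-1)) (σ k) := by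
  set A := univ.filter fun k => G.Adj (σ 0) (σ (k + 1))
  set B := univ.filter fun k => G.Adj (σ (-1)) (σ k)
  have hA : #A = G.degree (σ 0) := by
    rw [← card_neighborFinset_eq_degree]
    exact card_equiv ((Equiv.addRight 1).trans σ) (by simp [A])
  have hB : #B = G.degree (σ (-1)) := by
    rw [← card_neighborFinset_eq_degree]
    exact card_equiv σ (by simp [B])
  have hAsub : A ⊆ univ.erase (-1) := fun k hk => by
    simp only [A, mem_filter, mem_univ, true_and] at hk
    exact mem_erase.2 ⟨fun h => hk.ne (by rw [h, neg_add_cancel]), mem_univ _⟩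
  have hBsub : B ⊆ univ.erase (-1) := fun k hk => by
    simp only [B, mem_filter, mem_univ, true_and] at hk
    exact mem_erase.2 ⟨fun h => hk.ne (by rw [h]), mem_univ _⟩
  have hcard : #(univ.erase (-1 : ZMod n)) < #A + #B := by
    rw [card_erase_of_mem (mem_univ _), card_univ, ZMod.card, hA, hB]
    have := NeZero.pos n
    omega
  obtain ⟨k, hk⟩ := inter_nonempty_of_card_lt_card_add_card hAsub hBsub hcard
  simp only [A, B, mem_inter, mem_filter, mem_univ, true_and] at hk
  exact ⟨k, fun h => hk.2.ne (by rw [h]), hk⟩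

theorem exists_isHamiltonianOrdering_of_path [NeZero n] (σ : ZMod n ≃ V)
    (hσ : ∀ j, j ≠ -1 → G.Adj (σ j) (σ (j + 1)))
    (hdeg : n ≤ G.degree (σ 0) + G.degree (σ (-1))) :
    ∃ ρ : ZMod n ≃ V, G.IsHamiltonianOrdering ρ := by
  obtain ⟨k, hk, hk0, hk1⟩ := exists_adj_adj_of_le_degree_add_degree σ hdeg
  obtain ⟨m, rfl⟩ : ∃ m, n = m + 1 := ⟨n - 1, (Nat.succ_pred_eq_of_pos (NeZero.pos n)).symm⟩
  have hkm : k.val < m := lt_of_le_of_ne (Nat.lt_succ_iff.1 k.val_lt)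
    (mt ZMod.eq_neg_one_iff_val_eq.2 hk)
  -- Pósa's rotation: the cycle `σ 0, …, σ k, σ (-1), σ (-2), …, σ (k + 1)`.
  refine ⟨(reverseAfter_involutive k).toPerm.trans σ, fun z => ?_⟩
  simp only [Equiv.trans_apply, Function.Involutive.coe_toPerm, reverseAfter]
  by_cases hz : z = -1
  · have hzv := ZMod.eq_neg_one_iff_val_eq.1 hz
    subst hz
    rw [neg_add_cancel, if_neg (by omega), if_pos (by simp), sub_neg_eq_add]
    exact hk0.symm
  have hzv := ZMod.val_add_one_of_ne_neg_one hz
  rcases lt_trichotomy z.val k.val with hlt | heq | hgt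
  · rw [if_pos hlt.le, if_pos (by omega)]
    exact hσ z hz
  · obtain rfl : z = k := ZMod.val_injective _ heq
    rw [if_pos le_rfl, if_neg (by omega), sub_add_cancel_left]
    exact hk1.symm
  · rw [if_neg (by omega), if_neg (by omega)]
    have hw : k - (z + 1) ≠ -1 := fun h => (hgt.ne' (congrArg ZMod.val
      (by linear_combination -h : z = k)))
    simpa [sub_add_eq_sub_sub, sub_add_cancel] using (hσ _ hw).symm

theorem exists_isHamiltonianOrdering_of_sup_edge (hn : 3 ≤ n) {u v : V}
    (hdeg : n ≤ G.degree u + G.degree v) {σ : ZMod n ≃ V}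
    (hσ : (G ⊔ edge u v).IsHamiltonianOrdering σ) :
    ∃ ρ : ZMod n ≃ V, G.IsHamiltonianOrdering ρ := by
  have : NeZero n := ⟨by omega⟩
  by_cases hG : G.IsHamiltonianOrdering σ
  · exact ⟨σ, hG⟩
  obtain ⟨j, hj⟩ := not_forall.1 hG
  have huv : s(σ j, σ (j + 1)) = s(u, v) := by
    have := (hσ j).resolve_left hj
    rw [edge_adj] at this
    exact Sym2.eq_iff.2 this.1
  -- As `n ≥ 3`, the new edge occurs only once in `σ`, and `τ` moves it to `(τ (-1), τ 0)`.
  have h2 : (2 : ZMod n) ≠ 0 := by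
    rw [← Nat.cast_ofNat, Ne, ZMod.natCast_eq_zero_iff]
    exact fun h => absurd (Nat.le_of_dvd two_pos h) (by omega)
  let τ := (Equiv.addRight (j + 1)).trans σ
  have hτ (z) : τ z = σ (z + (j + 1)) := rfl
  apply exists_isHamiltonianOrdering_of_path τ
  · intro z hz
    rw [hτ, hτ, add_right_comm z 1]
    refine (hσ (z + (j + 1))).resolve_right fun he => ?_
    rw [edge_adj, ← Sym2.eq_iff, ← huv, Sym2.eq_iff] at he
    simp only [EmbeddingLike.apply_eq_iff_eq] at he
    rcases he.1 with ⟨h, -⟩ | ⟨h, h'⟩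
    · exact hz (by linear_combination h)
    · exact h2 (by linear_combination h' - h)
  · rw [hτ, hτ, zero_add, show -1 + (j + 1) = j by ring, add_comm]
    rcases Sym2.eq_iff.1 huv with ⟨h, h'⟩ | ⟨h, h'⟩ <;> rw [h, h'] <;> omega

theorem degree_add_degree_lt_of_maximal (hn : 3 ≤ n)
    (hG : Maximal (fun H : SimpleGraph V => ∀ σ : ZMod n ≃ V, ¬H.IsHamiltonianOrdering σ) G)
    {u v : V} (huv : u ≠ v) (hadj : ¬G.Adj u v) : G.degree u + G.degree v < n := by
  classical
  by_contra! hdeg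
  have hlt : G < G ⊔ edge u v :=
    left_lt_sup.2 fun h => hadj (h (by simp [edge_adj, huv]))
  obtain ⟨σ, hσ⟩ := not_forall_not.1 (hG.not_prop_of_gt hlt)
  obtain ⟨ρ, hρ⟩ := exists_isHamiltonianOrdering_of_sup_edge hn hdeg hσ
  exact hG.prop ρ hρ

end Rotation

section CliqueUnion
variable {ι : Type*} {S : ι → Finset V} {r : ℕ}

def cliqueUnion (S : ι → Finset V) : SimpleGraph V :=
  fromRel fun a b => ∃ i, a ∈ S i ∧ b ∈ S i

theorem cliqueUnion_adj {a b : V} : (cliqueUnion S).Adj a b ↔ a ≠ b ∧ ∃ i, a ∈ S i ∧ b ∈ S i := by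
  simp only [cliqueUnion, fromRel_adj, and_congr_right_iff]
  exact fun _ => or_iff_left_of_imp fun ⟨i, hb, ha⟩ => ⟨i, ha, hb⟩

variable [Fintype V] [Fintype ι] [DecidableEq V] {K : SimpleGraph V} [DecidableRel K.Adj]

theorem degree_le_of_le_cliqueUnion (hK : K ≤ cliqueUnion S) (hS : ∀ i, #(S i) = r) (w : V) :
    K.degree w ≤ #{i | w ∈ S i} * (r - 1) := by
  rw [← card_neighborFinset_eq_degree]
  refine (card_le_card fun x hx => ?_).trans
    (card_biUnion_le_card_mul _ (fun i => (S i).erase w) _ fun i hi => ?_)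
  · obtain ⟨hwx, i, hw, hx⟩ := cliqueUnion_adj.1 (hK ((mem_neighborFinset _ _ _).1 hx))
    exact mem_biUnion.2 ⟨i, by simpa using hw, mem_erase.2 ⟨hwx.symm, hx⟩⟩
  · rw [card_erase_of_mem (by simpa using hi), hS]

theorem sum_card_filter_mem (hS : ∀ i, #(S i) = r) :
    ∑ w : V, #{i | w ∈ S i} = Fintype.card ι * r := by
  have := sum_card_bipartiteAbove_eq_sum_card_bipartiteBelow (s := univ) (t := univ)
    (r := fun w i => w ∈ S i)
  simp_all [bipartiteAbove, bipartiteBelow]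

end CliqueUnion

variable [Fintype V]

-- Take an edge `uv` of minimal degree sum with `deg v ≤ deg u`. Every neighbour of `v` has degree
-- at least `deg u`, and the `deg u + 1` vertices of `insert u (N u)` have degree at least
-- `N - 1 - deg u`; at least `deg u + 1 - deg v` of the latter lie outside `N v`.
theorem exists_mul_sub_one_le_of_le_degree_add_degree (K : SimpleGraph V) [DecidableRel K.Adj]
    (hK : K ≠ ⊥) (hedge : ∀ u v, K.Adj u v → Fintype.card V ≤ K.degree u + K.degree v + 1) :
    ∃ w, Fintype.card V * (Fintype.card V - 1) ≤
      Fintype.card V * K.degree w + 2 * ∑ v, K.degree v := by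
  classical
  obtain ⟨a, b, hab⟩ := ne_bot_iff_exists_adj.1 hK
  obtain ⟨⟨u, v⟩, huv, hmin⟩ := exists_min_image (univ.filter fun p : V × V => K.Adj p.1 p.2)
    (fun p => K.degree p.1 + K.degree p.2) ⟨(a, b), by simpa using hab⟩
  simp only [mem_filter, mem_univ, true_and, Prod.forall] at huv hmin
  wlog hvu : K.degree v ≤ K.degree u generalizing u v
  · exact this v u huv.symm (fun x y h => by have := hmin x y h; omega) (by omega)
  set N := Fintype.card V
  set W := insert u (K.neighborFinset u) \ K.neighborFinset v
  have hNv : ∀ w ∈ K.neighborFinset v, K.degree u ≤ K.degree w := fun w hw => by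
    have := hmin v w ((mem_neighborFinset _ _ _).1 hw)
    omega
  have hW : ∀ w ∈ W, N ≤ K.degree w + (K.degree u + 1) := fun w hw => by
    rcases mem_insert.1 (mem_sdiff.1 hw).1 with rfl | hw
    · have := hedge w v huv
      omega
    · have := hedge u w ((mem_neighborFinset _ _ _).1 hw)
      omega
  have hWcard : K.degree u + 1 ≤ #W + K.degree v := by
    have : _ ≤ #W := le_card_sdiff (K.neighborFinset v) (insert u (K.neighborFinset u))
    rw [card_insert_of_notMem (by simp), card_neighborFinset_eq_degree,
      card_neighborFinset_eq_degree] at this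
    omega
  have hsum : ∑ w ∈ K.neighborFinset v, K.degree w + ∑ w ∈ W, K.degree w ≤ ∑ w, K.degree w := by
    rw [← sum_union disjoint_sdiff]
    exact sum_le_sum_of_subset (subset_univ _)
  have h1 : K.degree v * K.degree u ≤ ∑ w ∈ K.neighborFinset v, K.degree w := by
    simpa using card_nsmul_le_sum _ _ _ hNv
  have h2 : #W * N ≤ ∑ w ∈ W, K.degree w + #W * (K.degree u + 1) := by
    simpa [sum_add_distrib] using card_nsmul_le_sum _ _ _ hW
  have hu := K.degree_lt_card_verts u
  have huv' := hedge u v huv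
  refine ⟨u, ?_⟩
  obtain ⟨i, hi⟩ : ∃ i, N = K.degree u + 1 + i := ⟨N - (K.degree u + 1), by omega⟩
  rw [show N - 1 = K.degree u + i by omega]
  rw [hi] at h2 huv' ⊢
  nlinarith

theorem mul_sub_one_le_of_forall_not_isHamiltonianOrdering {ι : Type*} [Fintype ι] {r : ℕ}
    (S : ι → Finset V) (hS : ∀ i, #(S i) = r) (hV : Fintype.card V = n) (hn : 3 ≤ n)
    (h : ∀ σ : ZMod n ≃ V, ¬(cliqueUnion S)ᶜ.IsHamiltonianOrdering σ) :
    n * (n - 1) ≤ Fintype.card ι * (r - 1) * (n + 2 * r) := by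
  classical
  obtain ⟨H, hle, hH⟩ := Finite.exists_le_maximal
    (p := fun H : SimpleGraph V => ∀ σ : ZMod n ≃ V, ¬H.IsHamiltonianOrdering σ) h
  have : NeZero n := ⟨by omega⟩
  have hK : Hᶜ ≠ ⊥ := fun hbot => by
    rw [compl_eq_bot] at hbot
    subst hbot
    exact hH.prop _ (isHamiltonianOrdering_top (by omega)
      (Fintype.equivOfCardEq (by rw [ZMod.card, hV])))
  have hedge (u v : V) (huv : Hᶜ.Adj u v) : Fintype.card V ≤ Hᶜ.degree u + Hᶜ.degree v + 1 := by
    rw [compl_adj] at huv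
    have := degree_add_degree_lt_of_maximal hn hH huv.1 huv.2
    have := H.degree_lt_card_verts u
    have := H.degree_lt_card_verts v
    rw [degree_compl, degree_compl]
    omega
  obtain ⟨w, hw⟩ := exists_mul_sub_one_le_of_le_degree_add_degree Hᶜ hK hedge
  have hKS : Hᶜ ≤ cliqueUnion S := compl_le_iff_compl_le.1 hle
  have hdeg := degree_le_of_le_cliqueUnion hKS hS
  have hsum : ∑ v, Hᶜ.degree v ≤ Fintype.card ι * r * (r - 1) := by
    rw [← sum_card_filter_mem hS, sum_mul]
    exact sum_le_sum fun v _ => hdeg v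
  have hw' : Hᶜ.degree w ≤ Fintype.card ι * (r - 1) :=
    (hdeg w).trans (Nat.mul_le_mul_right _ (card_le_univ _))
  rw [hV] at hw
  calc n * (n - 1) ≤ n * Hᶜ.degree w + 2 * ∑ v, Hᶜ.degree v := hw
    _ ≤ n * (Fintype.card ι * (r - 1)) + 2 * (Fintype.card ι * r * (r - 1)) := by gcongr
    _ = Fintype.card ι * (r - 1) * (n + 2 * r) := by ring

end SimpleGraph

def twoOnes (r : ℕ) : Fin (r - 1) → ℕ := fun i => if (i : ℕ) = 0 then 2 else 1

theorem sum_twoOnes {r : ℕ} (hr : 2 ≤ r) : ∑ i, twoOnes r i = r := by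
  obtain ⟨s, rfl⟩ : ∃ s, r = s + 2 := ⟨r - 2, by omega⟩
  show ∑ i : Fin (s + 1), twoOnes (s + 2) i = s + 2
  simp [Fin.sum_univ_succ, twoOnes, Fin.succ_ne_zero, add_comm]

section CycInterval
variable {n : ℕ} {c : ZMod n ≃ Fin n}

theorem mem_cycInterval {t : ZMod n} {x i : ℕ} (hi : i < x) : c (t + i + 1) ∈ cycInterval c t x :=
  mem_image_of_mem _ (mem_range.2 hi)

theorem card_cycInterval {t : ZMod n} {x : ℕ} (hx : x ≤ n) : #(cycInterval c t x) = x := by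
  rw [cycInterval, card_image_of_injOn, card_range]
  intro i hi j hj hij
  simp only [coe_range, Set.mem_Iio] at hi hj
  have h : (i : ZMod n) = j := by simpa using hij
  rwa [ZMod.natCast_eq_natCast_iff', Nat.mod_eq_of_lt (by omega), Nat.mod_eq_of_lt (by omega)] at h

theorem exists_mem_mem_of_not_isXAcceptable {k : ℕ} {x : Fin k → ℕ} {F : Set (Finset (Fin n))}
    {i₀ : Fin k} (hx : 2 ≤ x i₀) (h : ¬IsXAcceptable x F c) :
    ∃ j, ∃ A ∈ F, c j ∈ A ∧ c (j + 1) ∈ A := by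
  obtain ⟨t, ht⟩ := not_not.1 h
  refine ⟨t i₀ + 1, _, ht, mem_biUnion.2 ⟨i₀, mem_univ _, ?_⟩, mem_biUnion.2 ⟨i₀, mem_univ _, ?_⟩⟩
  · simpa using mem_cycInterval (c := c) (t := t i₀) (i := 0) (by omega)
  · simpa [add_assoc, one_add_one_eq_two] using
      mem_cycInterval (c := c) (t := t i₀) (i := 1) (by omega)

theorem biUnion_cycInterval_twoOnes {r : ℕ} (hr : 2 ≤ r) :
    univ.biUnion (fun i : Fin (r - 1) =>
      cycInterval c (if (i : ℕ) = 0 then 0 else ((i + 1 : ℕ) : ZMod n)) (twoOnes r i)) =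
      cycInterval c 0 r := by
  ext w
  simp only [mem_biUnion, mem_univ, true_and, cycInterval, mem_image, mem_range, twoOnes, zero_add]
  constructor
  · rintro ⟨i, l, hl, rfl⟩
    split_ifs at hl ⊢ with hi
    · exact ⟨l, by omega, by simp⟩
    · obtain rfl : l = 0 := by omega
      exact ⟨i + 1, by omega, by push_cast; ring_nf⟩
  · rintro ⟨l, hl, rfl⟩
    by_cases hl1 : l ≤ 1
    · exact ⟨⟨0, by omega⟩, l, by rw [if_pos rfl]; omega, by simp⟩
    · refine ⟨⟨l - 1, by omega⟩, 0, by split_ifs <;> omega, ?_⟩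
      simp [show l - 1 ≠ 0 by omega, show l - 1 + 1 = l by omega]

end CycInterval

theorem exists_ncard_eq_mxn {k n : ℕ} {x : Fin k → ℕ}
    (h : ∃ F : Set (Finset (Fin n)), (∀ A ∈ F, #A = ∑ i, x i) ∧ ∀ c, ¬IsXAcceptable x F c) :
    ∃ F : Set (Finset (Fin n)), (∀ A ∈ F, #A = ∑ i, x i) ∧ F.ncard = mxn x n ∧
      ∀ c, ¬IsXAcceptable x F c := by
  obtain ⟨F, hF, hc⟩ := h
  exact Nat.sInf_mem (s := {m | ∃ F : Set (Finset (Fin n)), (∀ A ∈ F, #A = ∑ i, x i) ∧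
    F.ncard = m ∧ ∀ c, ¬IsXAcceptable x F c}) ⟨_, F, hF, rfl, hc⟩

theorem mul_sub_one_le_mxn_twoOnes {r n : ℕ} (hr : 2 ≤ r) (hrn : r ≤ n) (hn : 3 ≤ n) :
    n * (n - 1) ≤ mxn (twoOnes r) n * (r - 1) * (n + 2 * r) := by
  classical
  have : NeZero n := ⟨by omega⟩
  obtain ⟨F, hFr, hFcard, hF⟩ := exists_ncard_eq_mxn
    ⟨{A | #A = r}, fun A hA => by rwa [sum_twoOnes hr], fun c hc => hc ⟨_, by
      rw [Set.mem_ofPred_eq, biUnion_cycInterval_twoOnes hr, card_cycInterval hrn]⟩⟩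
  rw [sum_twoOnes hr] at hFr
  have hcount := mul_sub_one_le_of_forall_not_isHamiltonianOrdering (ι := F) Subtype.val
    (fun A => hFr A A.2) (Fintype.card_fin n) hn fun σ hσ => ?_
  · rwa [← Nat.card_eq_fintype_card, Nat.card_coe_set_eq, hFcard] at hcount
  obtain ⟨j, A, hA, hj, hj1⟩ :=
    exists_mem_mem_of_not_isXAcceptable (i₀ := ⟨0, by omega⟩) (by simp [twoOnes]) (hF σ)
  obtain ⟨hne, hnadj⟩ := (compl_adj _ _ _).1 (hσ j)
  exact hnadj (cliqueUnion_adj.2 ⟨hne, ⟨A, hA⟩, hj, hj1⟩)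

theorem div_le_of_mul_sub_one_le {n r t : ℕ} (hn : 1 ≤ n) (hr : 2 ≤ r)
    (h : n * (n - 1) ≤ t * (r - 1) * (n + 2 * r)) :
    (n : ℝ) * ((n : ℝ) - 1) / (((n : ℝ) + 2 * r) * ((r : ℝ) - 1)) ≤ t := by
  have hr' : (2 : ℝ) ≤ r := by exact_mod_cast hr
  rw [div_le_iff₀ (by nlinarith)]
  have := (Nat.cast_le (α := ℝ)).2 h
  push_cast [Nat.cast_sub hn, Nat.cast_sub (by omega : 1 ≤ r)] at this
  linarith

/-- **Theorem (lower bound for `x = (2,1,…,1)`).**  Let `r ≥ 3` and `n ≥ r`.  If `t`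
copies of `K_r` can be deleted from `K_n` (i.e. all edges inside each of `t` chosen
`r`-element vertex subsets are removed) so that the resulting graph is not Hamiltonian,
then `t ≥ n(n−1)/((n+2r)(r−1))`.  Equivalently, for `x = (2,1,…,1)` with `r − 2` ones,
`m(x,n) ≥ n(n−1)/((n+2r)(r−1))`. -/
theorem lower_bound_two_one_one (r n t : ℕ) (hr : 3 ≤ r) (hn : r ≤ n)
    (S : Fin t → Finset (Fin n)) (hS : ∀ i, (S i).card = r)
    (G : SimpleGraph (Fin n))
    (hG : ∀ a b : Fin n, G.Adj a b ↔ a ≠ b ∧ ¬ ∃ i, a ∈ S i ∧ b ∈ S i)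
    (hnotHam : ¬ ∃ (v : Fin n) (p : G.Walk v v), p.IsHamiltonianCycle) :
    (n : ℝ) * ((n : ℝ) - 1) / (((n : ℝ) + 2 * r) * ((r : ℝ) - 1)) ≤ (t : ℝ) ∧
    (n : ℝ) * ((n : ℝ) - 1) / (((n : ℝ) + 2 * r) * ((r : ℝ) - 1)) ≤
      (mxn (fun i : Fin (r - 1) => if (i : ℕ) = 0 then 2 else 1) n : ℝ) := by
  have h3 : 3 ≤ n := hr.trans hn
  have hGS : G = (cliqueUnion S)ᶜ := by
    ext a b
    rw [hG, compl_adj, cliqueUnion_adj]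
    exact and_congr_right fun hab => not_congr (and_iff_right hab).symm
  subst hGS
  have hcount := mul_sub_one_le_of_forall_not_isHamiltonianOrdering S hS (Fintype.card_fin n) h3
    fun σ hσ => hnotHam (IsHamiltonianOrdering.exists_isHamiltonianCycle h3 hσ)
  rw [Fintype.card_fin] at hcount
  exact ⟨div_le_of_mul_sub_one_le (by omega) (by omega) hcount,
    div_le_of_mul_sub_one_le (by omega) (by omega) (mul_sub_one_le_mxn_twoOnes (by omega) hn h3)⟩
end

section
/- For n ≥ 4 the quantity p((2,2),n) satisfies (n−3)(n−2)/6 ≤ p((2,2),n) ≤ C(n−2,2). The upper bound is witnessed by the family F = {X ∈ [n]^(4) : 1 ∈ X and 2 ∈ X}, for which K_n has no (2,2)-acceptable Hamilton path. -/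
/-- A Hamilton path in the complete graph `K_n` is modelled as an ordering of the vertex
set, i.e. a bijection `c : Fin n ≃ Fin n` from positions to vertices; its edges are the
pairs `{c i, c (i+1)}` for `0 ≤ i < n − 1`.  Given a family `F` of 4-element subsets of
the vertex set, the Hamilton path is `(2,2)`-*acceptable* for `F` if there do not exist
two disjoint edges of the path whose union is an element of `F`.  (Since members of `F`
have four elements, the union of two path edges lies in `F` only if the edges are
disjoint.) -/
def IsHP22Acceptable {n : ℕ} (F : Set (Finset (Fin n))) (c : Fin n ≃ Fin n) : Prop :=
  ¬ ∃ (i j : ℕ) (hi : i + 1 < n) (hj : j + 1 < n),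
      ({c ⟨i, Nat.lt_of_succ_lt hi⟩, c ⟨i + 1, hi⟩} ∪
        {c ⟨j, Nat.lt_of_succ_lt hj⟩, c ⟨j + 1, hj⟩} : Finset (Fin n)) ∈ F

/-- `p22 n` is the size of the smallest family `F` of 4-element subsets of `[n]` such
that `K_n` has no `(2,2)`-acceptable Hamilton path with respect to `F`. -/
noncomputable def p22 (n : ℕ) : ℕ :=
  sInf {m : ℕ | ∃ F : Set (Finset (Fin n)),
    (∀ A ∈ F, A.card = 4) ∧ F.ncard = m ∧
    ∀ c : Fin n ≃ Fin n, ¬ IsHP22Acceptable F c}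

/-!
Upper bound: any two vertices of a Hamilton path lie in the union of two disjoint path edges,
so the `C(n-2, 2)` four-sets containing two fixed vertices meet every Hamilton path.

Lower bound: read an ordering `c` of the vertices as a Hamilton cycle. Deleting any cycle edge
leaves a Hamilton path, which contains two disjoint edges with union in `F`; deleting first an
arbitrary edge and then an edge of the pair so found gives two different such pairs, i.e. four
ordered pairs of cycle positions. A fixed ordered pair of non-adjacent cycle positions is sent
onto a fixed four-set by `4! (n-4)!` orderings, so double counting gives
`4 n! ≤ n (n-3) |F| 4! (n-4)!`, i.e. `(n-1)(n-2) ≤ 6 |F|`.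
-/

open Finset
open scoped Nat

lemma ncard_setOf_card_eq_mem_mem {α : Type*} [Fintype α] {u v : α} (huv : u ≠ v) {k : ℕ}
    (hk : 2 ≤ k) :
    {X : Finset α | #X = k ∧ u ∈ X ∧ v ∈ X}.ncard = (Fintype.card α - 2).choose (k - 2) := by
  classical
  have : {X : Finset α | #X = k ∧ u ∈ X ∧ v ∈ X} =
      ↑((univ.powersetCard k).filter ({u, v} ⊆ ·)) := by
    ext X
    simp [insert_subset_iff]
  rw [this, Set.ncard_coe_finset, card_filter_powersetCard_subset _ _ _ (subset_univ _)
    (by rwa [card_pair huv]), card_pair huv, Finset.card_univ]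

lemma card_filter_perm_map_eq_le {α : Type*} [Fintype α] [DecidableEq α] (P X : Finset α) :
    #{σ : Equiv.Perm α | P.map σ.toEmbedding = X} ≤ (#X)! * (Fintype.card α - #X)! := by
  set S : Finset (Equiv.Perm α) := {σ | P.map σ.toEmbedding = X}
  obtain hS | ⟨σ₀, hσ₀⟩ := S.eq_empty_or_nonempty
  · simp [hS]
  have hPX : #P = #X := by rw [← (mem_filter.1 hσ₀).2, card_map]
  have hmaps : ∀ σ ∈ S, ∀ x, σ x ∈ X ↔ x ∈ P := by
    intro σ hσ x
    simp [← (mem_filter.1 hσ).2]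
  let g : S → (P ↪ X) × ((Pᶜ : Finset α) ↪ (Xᶜ : Finset α)) := fun σ =>
    (⟨fun x => ⟨σ.1 x, (hmaps σ.1 σ.2 x).2 x.2⟩,
      fun x y h => Subtype.ext (σ.1.injective (congrArg Subtype.val h))⟩,
     ⟨fun x => ⟨σ.1 x, mem_compl.2 (mt (hmaps σ.1 σ.2 x).1 (mem_compl.1 x.2))⟩,
      fun x y h => Subtype.ext (σ.1.injective (congrArg Subtype.val h))⟩)
  have hg : Function.Injective g := by
    intro σ τ h
    ext x
    by_cases hx : x ∈ P
    · exact congrArg Subtype.val (DFunLike.congr_fun (congrArg Prod.fst h) ⟨x, hx⟩)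
    · exact congrArg Subtype.val (DFunLike.congr_fun (congrArg Prod.snd h) ⟨x, mem_compl.2 hx⟩)
  calc #S = Fintype.card S := (Fintype.card_coe S).symm
    _ ≤ _ := Fintype.card_le_of_injective g hg
    _ = _ := by
      rw [Fintype.card_prod, Fintype.card_embedding_eq, Fintype.card_embedding_eq]
      simp [hPX, Nat.descFactorial_self]

lemma exists_disjoint_path_edges_covering {n a b : ℕ} (hn : 4 ≤ n) (hab : a < b) (hb : b < n) :
    ∃ i j, i + 1 < n ∧ j + 1 < n ∧ (i + 1 < j ∨ j + 1 < i) ∧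
      (a = i ∨ a = i + 1 ∨ a = j ∨ a = j + 1) ∧ (b = i ∨ b = i + 1 ∨ b = j ∨ b = j + 1) := by
  by_cases hadj : b = a + 1
  · by_cases h2a : 2 ≤ a
    · exact ⟨a, a - 2, by omega, by omega, by omega, by omega, by omega⟩
    · by_cases ha3 : a + 3 < n
      · exact ⟨a, a + 2, by omega, by omega, by omega, by omega, by omega⟩
      · exact ⟨0, 2, by omega, by omega, by omega, by omega, by omega⟩
  · by_cases hb1 : b + 1 < n
    · exact ⟨a, b, by omega, by omega, by omega, by omega, by omega⟩
    · by_cases ha2 : a + 2 < b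
      · exact ⟨a, b - 1, by omega, by omega, by omega, by omega, by omega⟩
      · exact ⟨a - 1, b - 1, by omega, by omega, by omega, by omega, by omega⟩

section Cycle

variable {n : ℕ} [NeZero n]

lemma Fin.mk_add_one {i : ℕ} (hi : i + 1 < n) : (⟨i, by omega⟩ : Fin n) + 1 = ⟨i + 1, hi⟩ :=
  Fin.ext (Fin.val_add_one_of_lt' hi)

/-- Positions are read modulo `n`, so that `cycleEdge c ⟨n - 1, _⟩ = {c (n - 1), c 0}`; the edges
of the Hamilton path `c` are the `cycleEdge c a` with `a + 1 < n`. -/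
def cycleEdge (c : Fin n ≃ Fin n) (a : Fin n) : Finset (Fin n) := {c a, c (a + 1)}

lemma cycleEdge_union_eq_map (c : Fin n ≃ Fin n) (a b : Fin n) :
    cycleEdge c a ∪ cycleEdge c b = ({a, a + 1, b, b + 1} : Finset (Fin n)).map c.toEmbedding := by
  ext x
  simp only [cycleEdge, mem_union, mem_insert, mem_singleton, mem_map_equiv, Equiv.symm_apply_eq]
  tauto

lemma cycleEdge_addRight_trans (c : Fin n ≃ Fin n) (m a : Fin n) :
    cycleEdge ((Equiv.addRight m).trans c) a = cycleEdge c (a + m) := by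
  simp [cycleEdge, add_right_comm]

lemma not_isHP22Acceptable_iff {F : Set (Finset (Fin n))} {c : Fin n ≃ Fin n} :
    ¬ IsHP22Acceptable F c ↔
      ∃ a b : Fin n, (a : ℕ) + 1 < n ∧ (b : ℕ) + 1 < n ∧ cycleEdge c a ∪ cycleEdge c b ∈ F := by
  rw [IsHP22Acceptable, not_not]
  constructor
  · rintro ⟨i, j, hi, hj, h⟩
    exact ⟨⟨i, _⟩, ⟨j, _⟩, hi, hj,
      by rwa [cycleEdge, cycleEdge, Fin.mk_add_one hi, Fin.mk_add_one hj]⟩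
  · rintro ⟨⟨i, _⟩, ⟨j, _⟩, hi, hj, h⟩
    exact ⟨i, j, hi, hj, by rwa [cycleEdge, cycleEdge, Fin.mk_add_one hi, Fin.mk_add_one hj] at h⟩

lemma exists_cycleEdge_union_mem_avoiding {F : Set (Finset (Fin n))}
    (hF : ∀ c, ¬ IsHP22Acceptable F c) (c : Fin n ≃ Fin n) (k : Fin n) :
    ∃ a b : Fin n, a ≠ k ∧ b ≠ k ∧ cycleEdge c a ∪ cycleEdge c b ∈ F := by
  -- `(Equiv.addRight (k + 1)).trans c` is the Hamilton path left by deleting `cycleEdge c k`.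
  obtain ⟨a, b, ha, hb, h⟩ := not_isHP22Acceptable_iff.1 (hF ((Equiv.addRight (k + 1)).trans c))
  have hne : ∀ x : Fin n, (x : ℕ) + 1 < n → x + (k + 1) ≠ k := by
    intro x hx hxk
    have := congrArg Fin.val (add_eq_right.mp ((by abel : x + 1 + k = x + (k + 1)).trans hxk))
    rw [Fin.val_add_one_of_lt' hx] at this
    simp at this
  refine ⟨a + (k + 1), b + (k + 1), hne a ha, hne b hb, ?_⟩
  rwa [cycleEdge_addRight_trans, cycleEdge_addRight_trans] at h

def nonadjacentPairs (n : ℕ) [NeZero n] : Finset (Fin n × Fin n) :=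
  univ.filter fun p => p.2 ∉ ({p.1 - 1, p.1, p.1 + 1} : Finset (Fin n))

lemma Fin.card_sub_one_self_add_one (hn : 3 ≤ n) (a : Fin n) :
    #({a - 1, a, a + 1} : Finset (Fin n)) = 3 := by
  have h1 : (1 : Fin n) ≠ 0 := by simp [Fin.ext_iff]; omega
  have h2 : (1 + 1 : Fin n) ≠ 0 := by
    simp [Fin.ext_iff, Fin.val_add, Nat.mod_eq_of_lt (show 2 < n by omega)]
  rw [card_eq_three]
  refine ⟨a - 1, a, a + 1, ?_, ?_, ?_, rfl⟩
  · simpa [sub_eq_iff_eq_add] using h1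
  · simpa [sub_eq_iff_eq_add, add_assoc] using h2
  · simpa using h1

lemma card_nonadjacentPairs (hn : 3 ≤ n) : #(nonadjacentPairs n) = n * (n - 3) := by
  have hfib (a : Fin n) :
      #(univ.filter fun b => b ∉ ({a - 1, a, a + 1} : Finset (Fin n))) = n - 3 := by
    rw [filter_not, filter_mem_eq_inter, univ_inter, ← compl_eq_univ_sdiff, card_compl,
      Fin.card_sub_one_self_add_one hn, Fintype.card_fin]
  rw [nonadjacentPairs, card_filter, Fintype.sum_prod_type]
  simp only [← card_filter, hfib, sum_const, Finset.card_fin, smul_eq_mul]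

lemma mem_nonadjacentPairs_of_card_eq_four {c : Fin n ≃ Fin n} {a b : Fin n}
    (h : #(cycleEdge c a ∪ cycleEdge c b) = 4) : (a, b) ∈ nonadjacentPairs n := by
  rw [cycleEdge_union_eq_map, card_map] at h
  simp only [nonadjacentPairs, mem_filter, mem_univ, true_and, mem_insert, mem_singleton]
  rintro (rfl | rfl | rfl)
  · simp only [sub_add_cancel, mem_insert, left_eq_add, Fin.one_eq_zero_iff, mem_singleton, or_true,
      insert_eq_of_mem] at h
    exact (card_le_three.trans_lt (by norm_num)).ne h
  · simp only [mem_insert, add_eq_left, Fin.one_eq_zero_iff, mem_singleton, or_true,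
      insert_eq_of_mem, left_eq_add, true_or] at h
    exact (card_le_two.trans_lt (by norm_num)).ne h
  · simp only [mem_insert, mem_singleton, left_eq_add, Fin.one_eq_zero_iff, true_or,
      insert_eq_of_mem] at h
    exact (card_le_three.trans_lt (by norm_num)).ne h

lemma four_le_card_filter_cycleEdge_union_eq {F : Finset (Finset (Fin n))}
    (hF4 : ∀ X ∈ F, #X = 4)
    (hF : ∀ c, ¬ IsHP22Acceptable (F : Set (Finset (Fin n))) c) (c : Fin n ≃ Fin n) :
    4 ≤ #((nonadjacentPairs n ×ˢ F).filter
      fun q => cycleEdge c q.1.1 ∪ cycleEdge c q.1.2 = q.2) := by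
  obtain ⟨a, b, -, -, hab⟩ := exists_cycleEdge_union_mem_avoiding hF c 0
  obtain ⟨a', b', ha', hb', hab'⟩ := exists_cycleEdge_union_mem_avoiding hF c a
  have hmem : ∀ {x y}, cycleEdge c x ∪ cycleEdge c y ∈ F →
      ((x, y), cycleEdge c x ∪ cycleEdge c y) ∈ (nonadjacentPairs n ×ˢ F).filter
        fun q => cycleEdge c q.1.1 ∪ cycleEdge c q.1.2 = q.2 := fun h =>
    mem_filter.2 ⟨mem_product.2 ⟨mem_nonadjacentPairs_of_card_eq_four (hF4 _ h), h⟩, rfl⟩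
  have hne : ∀ {x y}, cycleEdge c x ∪ cycleEdge c y ∈ F → x ≠ y := by
    rintro x _ h rfl
    simpa using (mem_filter.1 (mem_nonadjacentPairs_of_card_eq_four (hF4 _ h))).2
  have hba := hmem (union_comm (cycleEdge c a) _ ▸ hab)
  have hba' := hmem (union_comm (cycleEdge c a') _ ▸ hab')
  refine le_trans ?_ (card_le_card (insert_subset (hmem hab) (insert_subset hba
    (insert_subset (hmem hab') (singleton_subset_iff.2 hba')))))
  rw [card_insert_of_notMem, card_insert_of_notMem, card_insert_of_notMem, card_singleton]
  all_goals simp [hne hab, (hne hab).symm, hne hab', ha'.symm, hb'.symm]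

lemma exists_path_positions_covering (hn : 4 ≤ n) {p q : Fin n} (hpq : p ≠ q) :
    ∃ a b : Fin n, (a : ℕ) + 1 < n ∧ (b : ℕ) + 1 < n ∧
      #({a, a + 1, b, b + 1} : Finset (Fin n)) = 4 ∧
      p ∈ ({a, a + 1, b, b + 1} : Finset (Fin n)) ∧
      q ∈ ({a, a + 1, b, b + 1} : Finset (Fin n)) := by
  wlog hlt : p < q generalizing p q
  · obtain ⟨a, b, ha, hb, hcard, hq, hp⟩ :=
      this hpq.symm (lt_of_le_of_ne (not_lt.1 hlt) hpq.symm)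
    exact ⟨a, b, ha, hb, hcard, hp, hq⟩
  obtain ⟨i, j, hi, hj, hij, hp, hq⟩ := exists_disjoint_path_edges_covering hn hlt q.isLt
  refine ⟨⟨i, by omega⟩, ⟨j, by omega⟩, hi, hj, ?_⟩
  rw [Fin.mk_add_one hi, Fin.mk_add_one hj]
  refine ⟨?_, ?_, ?_⟩
  · rw [card_insert_of_notMem, card_insert_of_notMem, card_insert_of_notMem, card_singleton] <;>
      simp [Fin.ext_iff] <;> omega
  · simp [Fin.ext_iff]; omega
  · simp [Fin.ext_iff]; omega

end Cycle

theorem not_isHP22Acceptable_of_mem_mem {n : ℕ} (hn : 4 ≤ n) {u v : Fin n} (huv : u ≠ v)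
    (c : Fin n ≃ Fin n) : ¬ IsHP22Acceptable {X : Finset (Fin n) | #X = 4 ∧ u ∈ X ∧ v ∈ X} c := by
  have : NeZero n := ⟨by omega⟩
  obtain ⟨a, b, ha, hb, hcard, hu, hv⟩ :=
    exists_path_positions_covering hn (c.symm.injective.ne huv)
  refine not_isHP22Acceptable_iff.2 ⟨a, b, ha, hb, ?_⟩
  rw [cycleEdge_union_eq_map]
  exact ⟨by rwa [card_map], mem_map_equiv.2 hu, mem_map_equiv.2 hv⟩

theorem sub_one_mul_sub_two_le_six_mul_card {n : ℕ} (hn : 4 ≤ n)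
    {F : Finset (Finset (Fin n))} (hF4 : ∀ X ∈ F, #X = 4)
    (hF : ∀ c, ¬ IsHP22Acceptable (F : Set (Finset (Fin n))) c) :
    (n - 1) * (n - 2) ≤ 6 * #F := by
  have : NeZero n := ⟨by omega⟩
  have key := card_mul_le_card_mul (s := univ) (t := nonadjacentPairs n ×ˢ F)
    (fun (c : Fin n ≃ Fin n) q => cycleEdge c q.1.1 ∪ cycleEdge c q.1.2 = q.2)
    (m := 4) (n := 4 ! * (n - 4)!)
    (fun c _ => by
      simpa only [bipartiteAbove] using four_le_card_filter_cycleEdge_union_eq hF4 hF c)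
    (fun q hq => by
      simp only [bipartiteBelow, cycleEdge_union_eq_map]
      refine (card_filter_perm_map_eq_le (α := Fin n) _ _).trans_eq ?_
      rw [hF4 q.2 (mem_product.1 hq).2, Fintype.card_fin])
  rw [Finset.card_univ, Fintype.card_perm (α := Fin n), card_product,
    card_nonadjacentPairs (by omega), Fintype.card_fin] at key
  obtain ⟨m, rfl⟩ : ∃ m, n = m + 4 := ⟨n - 4, by omega⟩
  simp only [Nat.reduceSubDiff, Nat.add_sub_cancel, Nat.factorial_succ, Nat.factorial_zero] at key ⊢
  exact Nat.le_of_mul_le_mul_right (c := 4 * (m + 4) * (m + 1) * m !) (by linarith) (by positivity)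

/-- `[n]` is `Fin n`; the elements `1, 2 ∈ [n]` are `0, 1`. -/
theorem hamilton_path_two_two_bounds (n : ℕ) (hn : 4 ≤ n) :
    ((n : ℝ) - 3) * ((n : ℝ) - 2) / 6 ≤ (p22 n : ℝ) ∧
    p22 n ≤ Nat.choose (n - 2) 2 ∧
    ∀ c : Fin n ≃ Fin n,
      ¬ IsHP22Acceptable
        {X : Finset (Fin n) | X.card = 4 ∧
          (⟨0, by omega⟩ : Fin n) ∈ X ∧ (⟨1, by omega⟩ : Fin n) ∈ X} c := by
  have hblock := not_isHP22Acceptable_of_mem_mem hn (u := ⟨0, by omega⟩) (v := ⟨1, by omega⟩)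
    (by simp)
  have hmem : (n - 2).choose 2 ∈ {m : ℕ | ∃ F : Set (Finset (Fin n)),
      (∀ A ∈ F, A.card = 4) ∧ F.ncard = m ∧ ∀ c : Fin n ≃ Fin n, ¬ IsHP22Acceptable F c} :=
    ⟨_, fun _ hA => hA.1,
      by rw [ncard_setOf_card_eq_mem_mem (k := 4) (by simp) (by norm_num), Fintype.card_fin],
      hblock⟩
  obtain ⟨F, hF4, hFcard, hF⟩ : p22 n ∈ _ := Nat.sInf_mem ⟨_, hmem⟩
  obtain ⟨F, rfl⟩ := (Set.toFinite F).exists_finset_coe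
  have hlow : (((n - 1) * (n - 2) : ℕ) : ℝ) ≤ 6 * #F := by
    exact_mod_cast sub_one_mul_sub_two_le_six_mul_card hn hF4 hF
  rw [Set.ncard_coe_finset] at hFcard
  refine ⟨?_, Nat.sInf_le hmem, hblock⟩
  push_cast [Nat.cast_sub (show 1 ≤ n by omega), Nat.cast_sub (show 2 ≤ n by omega)] at hlow
  have hn' : (4 : ℝ) ≤ n := by exact_mod_cast hn
  rw [← hFcard, div_le_iff₀ (by norm_num)]
  nlinarith
end
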